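/- arXiv:1709.03663 — 4 statements merged into one kernel-verified Lean document; each statement's English description precedes it below -/
import Mathlib

section
/- Let f be a linear threshold function on n variables. Then f has a realization (w, θ) with Σ_{i=1}^n w_i > 2θ if and only if for every x ∈ {0,1}^n, f(x) = 0 implies f(x̄) = 1, where x̄ denotes the coordinatewise negation of x. -/
/-- Dot product of a rational weight vector with a 0-1 boolean vector. -/
def dotProd {n : ℕ} (w : Fin n → ℚ) (x : Fin n → Bool) : ℚ :=
  ∑ i, if x i then w i else 0

/-- `(w, θ)` is a realization of the boolean function `f`. -/
def IsRealization {n : ℕ} (f : (Fin n → Bool) → Bool) (w : Fin n → ℚ) (θ : ℚ) : Prop :=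
  ∀ x, f x = true ↔ θ < dotProd w x

/-- `f` is a linear threshold function. -/
def IsLTF {n : ℕ} (f : (Fin n → Bool) → Bool) : Prop :=
  ∃ w θ, IsRealization f w θ

/-!
Complementing `x` turns `w · x` into `∑ wᵢ - w · x`. If `2θ < ∑ wᵢ` and `w · x ≤ θ`, then
`w · x̄ ≥ ∑ wᵢ - θ > θ`, which gives one direction. Conversely, lower the threshold of any
realization to the largest value `w · y` over the zeros `y` of `f`
(or to a low enough value if `f ≡ 1`): this is still a realization, and
since `f ȳ = 1` we get `∑ wᵢ - w · y = w · ȳ > θ ≥ w · y`.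
-/

variable {n : ℕ} {f : (Fin n → Bool) → Bool} {w : Fin n → ℚ} {θ : ℚ}

lemma dotProd_not (w : Fin n → ℚ) (x : Fin n → Bool) :
    dotProd w (fun i => !x i) = ∑ i, w i - dotProd w x := by
  simp only [dotProd, ← Finset.sum_sub_distrib]
  refine Finset.sum_congr rfl fun i _ => ?_
  by_cases hxi : x i <;> simp [hxi]

namespace IsRealization

lemma dotProd_le_of_eq_false (hw : IsRealization f w θ) {x : Fin n → Bool}
    (hx : f x = false) : dotProd w x ≤ θ := by
  by_contra! hlt
  simp [(hw x).2 hlt] at hx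

lemma of_le_of_forall_eq_false (hw : IsRealization f w θ) {θ' : ℚ} (hθ' : θ' ≤ θ)
    (hzeros : ∀ x, f x = false → dotProd w x ≤ θ') : IsRealization f w θ' := by
  intro x
  refine ⟨fun hx => hθ'.trans_lt ((hw x).1 hx), fun hlt => ?_⟩
  by_contra hx
  exact (hzeros x (Bool.eq_false_iff.2 hx)).not_gt hlt

lemma not_eq_true_of_eq_false (hw : IsRealization f w θ) (hθ : 2 * θ < ∑ i, w i)
    {x : Fin n → Bool} (hx : f x = false) : f (fun i => !x i) = true := by
  rw [hw, dotProd_not]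
  linarith [hw.dotProd_le_of_eq_false hx]

lemma exists_two_mul_lt_sum (hw : IsRealization f w θ)
    (hf : ∀ x, f x = false → f (fun i => !x i) = true) :
    ∃ θ', IsRealization f w θ' ∧ 2 * θ' < ∑ i, w i := by
  obtain ⟨c, hc, hc'⟩ : ∃ c, c ≤ θ ∧ 2 * c < ∑ i, w i :=
    ⟨min θ ((∑ i, w i) / 2 - 1), min_le_left _ _, by linarith [min_le_right θ ((∑ i, w i) / 2 - 1)]⟩
  let g : (Fin n → Bool) → ℚ := fun x => if f x then c else dotProd w x
  obtain ⟨y, -, hy⟩ := Finset.univ.exists_max_image g Finset.univ_nonempty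
  have hzeros : ∀ x, f x = false → dotProd w x ≤ g y := fun x hx => by
    simpa [g, hx] using hy x (Finset.mem_univ x)
  cases hfy : f y
  case true =>
    simp only [g, hfy, if_true] at hzeros
    exact ⟨c, hw.of_le_of_forall_eq_false hc hzeros, hc'⟩
  case false =>
    simp only [g, hfy] at hzeros
    have hyθ := hw.dotProd_le_of_eq_false hfy
    have hθy := (hw _).1 (hf y hfy)
    rw [dotProd_not] at hθy
    exact ⟨dotProd w y, hw.of_le_of_forall_eq_false hyθ hzeros, by linarith⟩

end IsRealization

/-- An LTF has an ample realization iff `f x = 0` implies `f x̄ = 1` for all `x`. -/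
theorem stmt_8 (n : ℕ) (f : (Fin n → Bool) → Bool) (hf : IsLTF f) :
    (∃ w θ, IsRealization f w θ ∧ 2 * θ < ∑ i, w i) ↔
      ∀ x, f x = false → f (fun i => !(x i)) = true := by
  refine ⟨fun ⟨w, θ, hw, hθ⟩ x hx => hw.not_eq_true_of_eq_false hθ hx, fun h => ?_⟩
  obtain ⟨w, θ, hw⟩ := hf
  exact ⟨w, hw.exists_two_mul_lt_sum h⟩
end

section
/- Let f be a linear threshold function on n variables. Then f is ample (i.e., f(x) = 0 implies f(x̄) = 1 for all x ∈ {0,1}^n) if and only if the cardinality of its true set satisfies |f^{−1}(1)| ≥ 2^{n−1}. -/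
section Involution

variable {α : Type*} [Fintype α] (g : α → Bool) {σ : α → α}

theorem card_filter_true_add_card_filter_false :
    (Finset.univ.filter fun x => g x = true).card +
      (Finset.univ.filter fun x => g x = false).card = Fintype.card α := by
  simpa using Finset.card_filter_add_card_filter_not (s := Finset.univ) (fun x => g x = true)

theorem card_filter_false_le_card_filter_true_of_involutive (hσ : Function.Involutive σ)
    (h : ∀ x, g x = false → g (σ x) = true) :
    (Finset.univ.filter fun x => g x = false).card ≤
      (Finset.univ.filter fun x => g x = true).card :=
  Finset.card_le_card_of_injOn σ (fun x hx => by simp_all) hσ.injective.injOn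

theorem card_filter_true_lt_card_filter_false_of_involutive [DecidableEq α]
    (hσ : Function.Involutive σ)
    (h : ∀ y, g y = true → g (σ y) = false) {x : α} (hx : g x = false) (hσx : g (σ x) = false) :
    (Finset.univ.filter fun x => g x = true).card <
      (Finset.univ.filter fun x => g x = false).card := by
  have hmaps : ∀ y ∈ Finset.univ.filter fun x => g x = true,
      σ y ∈ (Finset.univ.filter fun x => g x = false).erase x := by
    intro y hy
    have hy : g y = true := by simpa using hy
    refine Finset.mem_erase.2 ⟨?_, Finset.mem_filter.2 ⟨Finset.mem_univ _, h y hy⟩⟩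
    rintro rfl
    rw [hσ y] at hσx
    simp [hy] at hσx
  calc (Finset.univ.filter fun x => g x = true).card
      ≤ ((Finset.univ.filter fun x => g x = false).erase x).card :=
        Finset.card_le_card_of_injOn σ hmaps hσ.injective.injOn
    _ < (Finset.univ.filter fun x => g x = false).card :=
        Finset.card_erase_lt_of_mem (Finset.mem_filter.2 ⟨Finset.mem_univ x, hx⟩)

end Involution

theorem two_pow_pred_le_iff_two_pow_le_two_mul (n t : ℕ) : 2 ^ (n - 1) ≤ t ↔ 2 ^ n ≤ 2 * t := by
  rcases n with _ | n
  · omega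
  · rw [Nat.add_sub_cancel, pow_succ]
    omega

theorem dotProd_add_dotProd_not {n : ℕ} (w : Fin n → ℚ) (x : Fin n → Bool) :
    dotProd w x + dotProd w (fun i => !(x i)) = ∑ i, w i := by
  rw [dotProd, dotProd, ← Finset.sum_add_distrib]
  exact Finset.sum_congr rfl fun i _ => by cases x i <;> simp

theorem IsRealization.apply_not_eq_false_of_apply_eq_true {n : ℕ} {f : (Fin n → Bool) → Bool}
    {w : Fin n → ℚ} {θ : ℚ} (hf : IsRealization f w θ) {x : Fin n → Bool} (hx : f x = false)
    (hx' : f (fun i => !(x i)) = false) {y : Fin n → Bool} (hy : f y = true) :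
    f (fun i => !(y i)) = false := by
  have hx : dotProd w x ≤ θ := by simpa [hx] using (hf x).not
  have hx' : dotProd w (fun i => !(x i)) ≤ θ := by simpa [hx'] using (hf fun i => !(x i)).not
  have hy := (hf y).1 hy
  have hsum := dotProd_add_dotProd_not w x
  have hsum' := dotProd_add_dotProd_not w y
  simpa using (hf _).not.2 (by linarith)

/-- An LTF is ample iff its true set has cardinality at least `2^(n-1)`. -/
theorem stmt_10 (n : ℕ) (f : (Fin n → Bool) → Bool) (hf : IsLTF f) :
    (∀ x, f x = false → f (fun i => !(x i)) = true) ↔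
      2 ^ (n - 1) ≤ (Finset.univ.filter fun x : Fin n → Bool => f x = true).card := by
  obtain ⟨w, θ, hw⟩ := hf
  have htotal := card_filter_true_add_card_filter_false f
  rw [Fintype.card_fun, Fintype.card_bool, Fintype.card_fin] at htotal
  rw [two_pow_pred_le_iff_two_pow_le_two_mul]
  constructor
  · intro hample
    have := card_filter_false_le_card_filter_true_of_involutive f compl_involutive hample
    omega
  · intro hcard
    by_contra! ⟨x, hx, hx'⟩
    replace hx' := Bool.eq_false_iff.2 hx'
    have := card_filter_true_lt_card_filter_false_of_involutive f compl_involutive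
      (fun _ => hw.apply_not_eq_false_of_apply_eq_true hx hx') hx hx'
    omega
end

section
/- Let f be a nondegenerate linear threshold function on n variables, i.e., an LTF such that for every i ∈ {1,…,n} there exist two inputs differing only in the i-th coordinate on which f takes different values. Then the N-type class of f, the set {f ∘ γ_u : u ∈ {0,1}^n} of all u-complementations of f, contains exactly 2^n distinct boolean functions; equivalently, the map u ↦ f ∘ γ_u is injective. -/
/-!
An LTF with weight `w` is nondecreasing in `x_i` when `w i ≥ 0` and nonincreasing when
`w i ≤ 0`. If `f ∘ γ_u = f ∘ γ_v` with `u i ≠ v i`, then `f` is invariant under `γ_s` for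
`s = u xor v`, which flips `x_i`. Complementing a witness `x` of the dependence of `f` on `x_i`
exchanges the roles of `x_i = 0` and `x_i = 1`, so `f` would be increasing and decreasing in
`x_i` at the same time.
-/

open Function

variable {ι : Type*}

/-- The `u`-complementation `γ_u`. -/
def complement (u x : ι → Bool) : ι → Bool := fun i => xor (u i) (x i)

@[simp]
lemma complement_complement (u x : ι → Bool) : complement u (complement u x) = x := by
  funext i
  simp [complement]

lemma complement_complement_eq_complement_xor (u v x : ι → Bool) :
    complement v (complement u x) = complement (fun i => xor (u i) (v i)) x := by
  funext i
  simp only [complement]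
  rw [Bool.xor_left_comm, Bool.xor_assoc]

lemma complement_update [DecidableEq ι] (u x : ι → Bool) (i : ι) (b : Bool) :
    complement u (update x i b) = update (complement u x) i (xor (u i) b) := by
  funext j
  rcases eq_or_ne j i with rfl | hj
  · simp [complement]
  · simp [complement, update_of_ne hj]

/-- `f` is monotone in the coordinate `i` for `b = false` and antitone in it for `b = true`. -/
def UnateIn [DecidableEq ι] (f : (ι → Bool) → Bool) (i : ι) : Prop :=
  ∃ b : Bool, ∀ y, f (update y i b) ≤ f (update y i !b)

lemma UnateIn.comp_complement_ne [DecidableEq ι] {f : (ι → Bool) → Bool} {i : ι}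
    (hf : UnateIn f i) {x : ι → Bool} (hx : f (update x i true) ≠ f (update x i false))
    {s : ι → Bool} (hs : s i = true) : (fun y => f (complement s y)) ≠ f := by
  obtain ⟨b, hb⟩ := hf
  intro hinv
  have hflip : ∀ c, f (update (complement s x) i c) = f (update x i !c) := by
    intro c
    rw [← congrFun hinv, complement_update, complement_complement, hs,
      Bool.true_xor]
  have hx' : f (update x i b) < f (update x i !b) := by
    refine (hb x).lt_of_ne ?_
    cases b
    · exact hx.symm
    · exact hx
  have hz := hb (complement s x)
  rw [hflip, hflip, Bool.not_not] at hz
  exact hz.not_gt hx'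

lemma dotProd_update {n : ℕ} (w : Fin n → ℚ) (x : Fin n → Bool) (i : Fin n) (b : Bool) :
    dotProd w (update x i b) = dotProd w (update x i false) + if b then w i else 0 := by
  unfold dotProd
  rw [← Finset.add_sum_erase _ _ (Finset.mem_univ i),
    ← Finset.add_sum_erase _ _ (Finset.mem_univ i)]
  have hrest : ∀ c : Bool, ∑ j ∈ Finset.univ.erase i, (if update x i c j then w j else 0)
      = ∑ j ∈ Finset.univ.erase i, (if x j then w j else 0) := fun c =>
    Finset.sum_congr rfl fun j hj => by rw [update_of_ne (Finset.ne_of_mem_erase hj)]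
  cases b <;> simp [hrest, add_comm]

lemma IsRealization.unateIn {n : ℕ} {f : (Fin n → Bool) → Bool} {w : Fin n → ℚ} {θ : ℚ}
    (hf : IsRealization f w θ) (i : Fin n) : UnateIn f i := by
  refine ⟨decide (w i < 0), fun y => Bool.le_iff_imp.2 fun hy => ?_⟩
  rw [hf, dotProd_update] at hy ⊢
  by_cases hw : w i < 0 <;> simp only [hw, decide_true, decide_false, Bool.not_true,
    Bool.not_false, Bool.false_eq_true, if_true, if_false] at hy ⊢ <;> linarith

/-- The N-type class of a nondegenerate LTF on `n` variables has exactly `2^n` distinct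
elements: the map `u ↦ f ∘ γ_u` is injective. -/
theorem stmt_16 (n : ℕ) (f : (Fin n → Bool) → Bool) (hf : IsLTF f)
    (hnd : ∀ i : Fin n, ∃ x : Fin n → Bool,
      f (Function.update x i true) ≠ f (Function.update x i false)) :
    Function.Injective
      (fun u : Fin n → Bool => fun x : Fin n → Bool => f (fun i => xor (u i) (x i))) := by
  obtain ⟨w, θ, hw⟩ := hf
  intro u v huv
  by_contra hne
  obtain ⟨i, hi⟩ := Function.ne_iff.1 hne
  obtain ⟨x, hx⟩ := hnd i
  refine (hw.unateIn i).comp_complement_ne hx (s := fun j => xor (u j) (v j)) (by simpa) ?_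
  funext y
  have h : f (complement u (complement u y)) = f (complement v (complement u y)) :=
    congrFun huv _
  rw [complement_complement, complement_complement_eq_complement_xor] at h
  exact h.symm
end

section
/- For every n, the number of Semi-Goldilocks linear threshold functions on n variables equals the number of linear threshold functions on n variables that are positive (monotone in each coordinate) and nondegenerate (depend on every coordinate). -/
/-- `f` depends on its `i`-th coordinate. -/
def DependsOnCoord {n : ℕ} (f : (Fin n → Bool) → Bool) (i : Fin n) : Prop :=
  ∃ x : Fin n → Bool, f (Function.update x i true) ≠ f (Function.update x i false)

/-- `f` is Semi-Goldilocks: an LTF with a positive realization and a small realization. -/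
def SemiGoldilocks {n : ℕ} (f : (Fin n → Bool) → Bool) : Prop :=
  IsLTF f ∧ (∃ w θ, IsRealization f w θ ∧ ∀ i, 0 < w i) ∧
    (∃ w θ, IsRealization f w θ ∧ ∀ i, w i ≤ θ)

open Finset

variable {n : ℕ}

def unitVec (i : Fin n) : Fin n → Bool := Function.update ⊥ i true

section dotProd

variable (w v : Fin n → ℚ) (x : Fin n → Bool)

lemma dotProd_unitVec (i : Fin n) : dotProd w (unitVec i) = w i := by
  simp [dotProd, unitVec, Function.update_apply]

lemma dotProd_add : dotProd (w + v) x = dotProd w x + dotProd v x := by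
  simp only [dotProd, ← sum_add_distrib]
  exact sum_congr rfl fun i _ => by cases x i <;> simp

variable {w x}

lemma dotProd_nonneg (hw : ∀ i, 0 ≤ w i) : 0 ≤ dotProd w x :=
  sum_nonneg fun i _ => by cases x i <;> simp [hw i]

lemma dotProd_le_sum (hw : ∀ i, 0 ≤ w i) : dotProd w x ≤ ∑ i, w i :=
  sum_le_sum fun i _ => by cases x i <;> simp [hw i]

lemma neg_sum_abs_le_dotProd : -∑ i, |w i| ≤ dotProd w x := by
  rw [← sum_neg_distrib]
  exact sum_le_sum fun i _ => by cases x i <;> simp [neg_abs_le]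

lemma dotProd_monotone (hw : ∀ i, 0 ≤ w i) : Monotone (dotProd w) := fun x y hxy =>
  sum_le_sum fun i _ => by
    have hi : x i = true → y i = true := Bool.le_iff_imp.mp (hxy i)
    cases hx : x i <;> cases hy : y i <;> simp_all

end dotProd

section realization

variable {f : (Fin n → Bool) → Bool} {w : Fin n → ℚ} {θ : ℚ}

lemma IsRealization.monotone (hr : IsRealization f w θ) (hw : ∀ i, 0 ≤ w i) : Monotone f :=
  fun x y hxy => Bool.le_iff_imp.mpr fun hx =>
    (hr y).mpr (((hr x).mp hx).trans_le (dotProd_monotone hw hxy))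

/-- Clipping negative weights to `0` changes `dotProd w x` into `dotProd w x'`, where `x'` switches
off the coordinates of negative weight; monotonicity makes `f x' = f x`. -/
lemma IsRealization.exists_nonneg_of_monotone (hr : IsRealization f w θ) (hf : Monotone f) :
    ∃ w', IsRealization f w' θ ∧ ∀ i, 0 ≤ w' i := by
  refine ⟨fun i => max (w i) 0, fun x => ?_, fun i => le_max_right _ _⟩
  set x' : Fin n → Bool := fun i => x i && decide (0 ≤ w i)
  have hclip : dotProd (fun i => max (w i) 0) x = dotProd w x' :=
    sum_congr rfl fun i _ => by
      by_cases hw : 0 ≤ w i <;> cases hxi : x i <;> simp [x', hxi, hw, le_of_not_ge]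
  have hle : dotProd w x ≤ dotProd w x' :=
    sum_le_sum fun i _ => by
      by_cases hw : 0 ≤ w i <;> cases hxi : x i <;> simp [x', hxi, hw, le_of_not_ge]
  have hx' : x' ≤ x := fun i => by cases hxi : x i <;> simp [x', hxi]
  rw [hclip]
  exact ⟨fun hx => ((hr x).mp hx).trans_le hle,
    fun hlt => Bool.le_iff_imp.mp (hf hx') ((hr x').mpr hlt)⟩

lemma IsRealization.exists_margin (hr : IsRealization f w θ) :
    ∃ δ > 0, ∀ x, f x = true → θ + δ ≤ dotProd w x := by
  by_cases hT : (univ.filter fun x => f x = true).Nonempty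
  · obtain ⟨x₀, hx₀, hmin⟩ := exists_min_image _ (dotProd w) hT
    refine ⟨dotProd w x₀ - θ, ?_, fun x hx => ?_⟩
    · simpa using (hr x₀).mp (by simpa using hx₀)
    · simpa using hmin x (by simpa using hx)
  · exact ⟨1, one_pos, fun x hx => absurd ⟨x, by simpa using hx⟩ hT⟩

/-- Adding `ε` to every weight moves `dotProd` by at most `n ε`, which is absorbed by raising the
threshold by `n ε` as long as `n ε` stays below the margin. -/
lemma IsRealization.exists_pos_of_nonneg (hr : IsRealization f w θ) (hw : ∀ i, 0 ≤ w i) :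
    ∃ w' θ', IsRealization f w' θ' ∧ ∀ i, 0 < w' i := by
  obtain ⟨δ, hδ, hmargin⟩ := hr.exists_margin
  set ε : ℚ := δ / (n + 1)
  have hε : 0 < ε := by positivity
  have hnε : n * ε < δ := by
    rw [mul_div_assoc', div_lt_iff₀ (by positivity)]
    nlinarith
  refine ⟨w + fun _ => ε, θ + n * ε, fun x => ?_, fun i => add_pos_of_nonneg_of_pos (hw i) hε⟩
  have hlo : 0 ≤ dotProd (fun _ => ε) x := dotProd_nonneg fun _ => hε.le
  have hhi : dotProd (fun _ => ε) x ≤ n * ε := by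
    simpa using dotProd_le_sum (x := x) fun _ => hε.le
  rw [dotProd_add]
  constructor
  · intro hx
    linarith [hmargin x hx]
  · intro hlt
    exact (hr x).mpr (by linarith)

lemma IsLTF.exists_pos_realization (hf : IsLTF f) (hm : Monotone f) :
    ∃ w θ, IsRealization f w θ ∧ ∀ i, 0 < w i := by
  obtain ⟨w, θ, hr⟩ := hf
  obtain ⟨w', hr', hw'⟩ := hr.exists_nonneg_of_monotone hm
  exact hr'.exists_pos_of_nonneg hw'

lemma IsRealization.le_of_apply_unitVec (hr : IsRealization f w θ) {i : Fin n}
    (hi : f (unitVec i) = false) : w i ≤ θ := by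
  rw [← dotProd_unitVec w i, ← not_lt, ← hr, hi]
  decide

end realization

theorem semiGoldilocks_iff (f : (Fin n → Bool) → Bool) :
    SemiGoldilocks f ↔ IsLTF f ∧ Monotone f ∧ ∀ i, f (unitVec i) = false := by
  constructor
  · rintro ⟨hf, ⟨w, θ, hr, hpos⟩, ⟨v, φ, hs, hsmall⟩⟩
    refine ⟨hf, hr.monotone fun i => (hpos i).le, fun i => ?_⟩
    rw [Bool.eq_false_iff, Ne, hs, dotProd_unitVec, not_lt]
    exact hsmall i
  · rintro ⟨hf, hm, hunit⟩
    obtain ⟨w, θ, hr⟩ := hf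
    exact ⟨⟨w, θ, hr⟩, IsLTF.exists_pos_realization ⟨w, θ, hr⟩ hm,
      w, θ, hr, fun i => hr.le_of_apply_unitVec (hunit i)⟩

section mask

def maskOff (s : Finset (Fin n)) (x : Fin n → Bool) : Fin n → Bool :=
  fun j => if j ∈ s then false else x j

variable {s : Finset (Fin n)} {x : Fin n → Bool} {i : Fin n}

lemma maskOff_monotone (s : Finset (Fin n)) : Monotone (maskOff s) := fun x y hxy j => by
  by_cases hj : j ∈ s <;> simp [maskOff, hj, hxy j]

lemma maskOff_maskOff : maskOff s (maskOff s x) = maskOff s x := by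
  funext j
  by_cases hj : j ∈ s <;> simp [maskOff, hj]

lemma maskOff_eq_self (hx : ∀ j ∈ s, x j = false) : maskOff s x = x := by
  funext j
  by_cases hj : j ∈ s <;> simp [maskOff, hj, hx]

lemma maskOff_apply_of_mem (hi : i ∈ s) : maskOff s x i = false := by
  simp [maskOff, hi]

lemma maskOff_update_of_mem (hi : i ∈ s) (b : Bool) :
    maskOff s (Function.update x i b) = maskOff s x := by
  funext j
  by_cases hj : j = i
  · subst hj
    simp [maskOff, hi]
  · simp [maskOff, hj]

lemma maskOff_update_of_notMem (hi : i ∉ s) (b : Bool) :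
    maskOff s (Function.update x i b) = Function.update (maskOff s x) i b := by
  funext j
  by_cases hj : j = i
  · subst hj
    simp [maskOff, hi]
  · simp [maskOff, hj]

lemma maskOff_insert : maskOff (insert i s) x = Function.update (maskOff s x) i false := by
  funext j
  by_cases hj : j = i
  · subst hj
    simp [maskOff]
  · simp [maskOff, hj]

lemma dotProd_maskOff (w : Fin n → ℚ) :
    dotProd w (maskOff s x) = dotProd (fun j => if j ∈ s then 0 else w j) x :=
  sum_congr rfl fun j _ => by by_cases hj : j ∈ s <;> simp [maskOff, hj]

lemma unitVec_apply_of_ne {j : Fin n} (hj : j ≠ i) : unitVec i j = false := by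
  simp [unitVec, hj]

lemma unitVec_le (hx : x i = true) : unitVec i ≤ x := fun j => by
  by_cases hj : j = i
  · subst hj
    simp [unitVec, hx]
  · simp [unitVec, hj]

end mask

section dependence

variable {f : (Fin n → Bool) → Bool} {i : Fin n}

lemma apply_update_of_not_dependsOnCoord (hf : ¬ DependsOnCoord f i) (x : Fin n → Bool)
    (b : Bool) : f (Function.update x i b) = f x := by
  simp only [DependsOnCoord, not_exists, not_not] at hf
  have hfalse : ∀ b, f (Function.update x i b) = f (Function.update x i false) := by
    rintro (_ | _)
    exacts [rfl, hf x]
  rw [hfalse, ← hfalse (x i), Function.update_eq_self]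

lemma apply_maskOff_of_not_dependsOnCoord {s : Finset (Fin n)}
    (hf : ∀ i ∈ s, ¬ DependsOnCoord f i) (x : Fin n → Bool) : f (maskOff s x) = f x := by
  induction s using Finset.induction_on with
  | empty => rw [maskOff_eq_self (by simp)]
  | insert i s _ ih =>
    rw [maskOff_insert, apply_update_of_not_dependsOnCoord (hf i (mem_insert_self i s)),
      ih fun j hj => hf j (mem_insert_of_mem hj)]

lemma Monotone.apply_bot_of_dependsOnCoord (hm : Monotone f) (hf : DependsOnCoord f i) :
    f ⊥ = false := by
  obtain ⟨x, hx⟩ := hf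
  by_contra h0
  have htop : ∀ y, f y = true := fun y =>
    Bool.le_iff_imp.mp (hm bot_le) (Bool.not_eq_false _ ▸ h0)
  exact hx ((htop _).trans (htop _).symm)

lemma Monotone.exists_of_dependsOnCoord (hm : Monotone f) (hf : DependsOnCoord f i) :
    ∃ x, f (Function.update x i true) = true ∧ f (Function.update x i false) = false := by
  obtain ⟨x, hx⟩ := hf
  have hle : f (Function.update x i false) ≤ f (Function.update x i true) :=
    hm (Function.update_mono (by decide))
  refine ⟨x, ?_⟩
  revert hx hle
  cases f (Function.update x i true) <;> cases f (Function.update x i false) <;> decide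

end dependence

section orMask

def orMask (s : Finset (Fin n)) (h : (Fin n → Bool) → Bool) (x : Fin n → Bool) : Bool :=
  decide (∃ i ∈ s, x i = true) || h (maskOff s x)

variable {s : Finset (Fin n)} {h : (Fin n → Bool) → Bool} {x : Fin n → Bool} {i : Fin n}

lemma orMask_apply_of_mem (hi : i ∈ s) (hx : x i = true) : orMask s h x = true := by
  simp only [orMask, Bool.or_eq_true, decide_eq_true_eq]
  exact Or.inl ⟨i, hi, hx⟩

lemma orMask_apply_of_forall (hx : ∀ j ∈ s, x j = false) : orMask s h x = h x := by
  have hnone : ¬ ∃ j ∈ s, x j = true := fun ⟨j, hj, hxj⟩ => by simp [hx j hj] at hxj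
  simp [orMask, hnone, maskOff_eq_self hx]

lemma orMask_comp_maskOff : orMask s (h ∘ maskOff s) = orMask s h := by
  funext x
  simp [orMask, maskOff_maskOff]

lemma Monotone.orMask (hm : Monotone h) : Monotone (orMask s h) := fun x y hxy => by
  simp only [_root_.orMask, Bool.le_iff_imp, Bool.or_eq_true, decide_eq_true_eq]
  rintro (⟨i, hi, hxi⟩ | hx)
  · exact Or.inl ⟨i, hi, Bool.le_iff_imp.mp (hxy i) hxi⟩
  · exact Or.inr (Bool.le_iff_imp.mp (hm (maskOff_monotone s hxy)) hx)

lemma IsLTF.comp_maskOff (hh : IsLTF h) : IsLTF (h ∘ maskOff s) := by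
  obtain ⟨w, θ, hr⟩ := hh
  exact ⟨fun j => if j ∈ s then 0 else w j, θ, fun x => by
    rw [Function.comp_apply, hr, dotProd_maskOff]⟩

lemma IsLTF.orMask (hh : IsLTF h) : IsLTF (orMask s h) := by
  obtain ⟨w, θ, hr⟩ := hh
  set M : ℚ := |θ| + ∑ j, |w j| + 1
  have hM : 0 ≤ M := by positivity
  refine ⟨(fun j => if j ∈ s then 0 else w j) + fun j => if j ∈ s then M else 0, θ, fun x => ?_⟩
  rw [dotProd_add, ← dotProd_maskOff]
  by_cases hx : ∃ i ∈ s, x i = true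
  · obtain ⟨i, hi, hxi⟩ := hx
    have hsingle : M ≤ dotProd (fun j => if j ∈ s then M else 0) x := by
      refine (single_le_sum (f := fun j => if x j = true then (if j ∈ s then M else 0) else 0)
        (fun j _ => ?_) (mem_univ i)).trans_eq' ?_
      · by_cases hj : j ∈ s <;> cases x j <;> simp [hj, hM]
      · simp [hi, hxi]
    have hlow := neg_sum_abs_le_dotProd (w := w) (x := maskOff s x)
    simp only [orMask_apply_of_mem hi hxi, true_iff]
    linarith [le_abs_self θ]
  · simp only [not_exists, not_and, Bool.not_eq_true] at hx
    have hzero : dotProd (fun j => if j ∈ s then M else 0) x = 0 :=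
      sum_eq_zero fun j _ => by by_cases hj : j ∈ s <;> simp [hj, hx]
    rw [hzero, add_zero, ← hr, orMask_apply_of_forall hx, maskOff_eq_self hx]

lemma dependsOnCoord_orMask_of_mem (h0 : h ⊥ = false) (hi : i ∈ s) :
    DependsOnCoord (orMask s h) i := by
  have hbot : Function.update (⊥ : Fin n → Bool) i false = ⊥ := Function.update_eq_self_iff.mpr rfl
  refine ⟨⊥, ?_⟩
  rw [orMask_apply_of_mem hi (by simp), hbot,
    orMask_apply_of_forall (x := ⊥) fun _ _ => rfl, h0]
  decide

lemma DependsOnCoord.orMask_of_notMem (hd : DependsOnCoord h i) (hi : i ∉ s)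
    (hs : ∀ x, h (maskOff s x) = h x) : DependsOnCoord (orMask s h) i := by
  obtain ⟨x, hx⟩ := hd
  have key : ∀ b, orMask s h (Function.update (maskOff s x) i b) = h (Function.update x i b) :=
    fun b => by
      rw [← maskOff_update_of_notMem hi, orMask_apply_of_forall fun j hj => maskOff_apply_of_mem hj,
        hs]
  exact ⟨maskOff s x, by rwa [key, key]⟩

end orMask

section correspondence

open Classical in
noncomputable def irrelevantCoords (f : (Fin n → Bool) → Bool) : Finset (Fin n) :=
  univ.filter fun i => ¬ DependsOnCoord f i

def trueUnits (g : (Fin n → Bool) → Bool) : Finset (Fin n) :=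
  univ.filter fun i => g (unitVec i) = true

variable {f g : (Fin n → Bool) → Bool}

lemma mem_irrelevantCoords {i : Fin n} : i ∈ irrelevantCoords f ↔ ¬ DependsOnCoord f i := by
  simp [irrelevantCoords]

lemma mem_trueUnits {i : Fin n} : i ∈ trueUnits g ↔ g (unitVec i) = true := by
  simp [trueUnits]

lemma orMask_trueUnits_of_monotone (hm : Monotone g) : orMask (trueUnits g) g = g := by
  funext x
  by_cases hx : ∃ i ∈ trueUnits g, x i = true
  · obtain ⟨i, hi, hxi⟩ := hx
    rw [orMask_apply_of_mem hi hxi]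
    exact (Bool.le_iff_imp.mp (hm (unitVec_le hxi)) (mem_trueUnits.mp hi)).symm
  · simp only [not_exists, not_and, Bool.not_eq_true] at hx
    exact orMask_apply_of_forall hx

lemma trueUnits_orMask {s : Finset (Fin n)} (hf : ∀ i ∉ s, f (unitVec i) = false) :
    trueUnits (orMask s f) = s := by
  ext i
  rw [mem_trueUnits]
  by_cases hi : i ∈ s
  · simp [orMask_apply_of_mem hi (by simp [unitVec] : unitVec i i = true), hi]
  · have hoff : ∀ j ∈ s, unitVec i j = false := fun j hj =>
      unitVec_apply_of_ne (by rintro rfl; exact hi hj)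
    simp [orMask_apply_of_forall hoff, hf i hi, hi]

/-- A witness of the dependence of `g` on `i ∉ trueUnits g` has all coordinates of
`trueUnits g` off, since otherwise monotonicity would force `g = true` on both updates. -/
lemma irrelevantCoords_comp_maskOff_trueUnits (hm : Monotone g) (hd : ∀ i, DependsOnCoord g i) :
    irrelevantCoords (g ∘ maskOff (trueUnits g)) = trueUnits g := by
  ext i
  rw [mem_irrelevantCoords]
  by_cases hi : i ∈ trueUnits g
  · refine iff_of_true (fun ⟨x, hx⟩ => hx ?_) hi
    simp only [Function.comp_apply, maskOff_update_of_mem hi]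
  · refine iff_of_false (not_not.mpr ?_) hi
    obtain ⟨x, htrue, hfalse⟩ := hm.exists_of_dependsOnCoord (hd i)
    have hoff : ∀ j ∈ trueUnits g, x j = false := fun j hj => by
      have hji : j ≠ i := by rintro rfl; exact hi hj
      by_contra hxj
      have hle : unitVec j ≤ Function.update x i false :=
        unitVec_le (by simpa [Function.update_apply, hji] using hxj)
      simp [Bool.le_iff_imp.mp (hm hle) (mem_trueUnits.mp hj)] at hfalse
    refine ⟨x, ?_⟩
    simp only [Function.comp_apply, maskOff_update_of_notMem hi, maskOff_eq_self hoff, htrue,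
      hfalse]
    decide

end correspondence

section bijection

variable {f g : (Fin n → Bool) → Bool}

noncomputable def toNondegenerate (f : (Fin n → Bool) → Bool) : (Fin n → Bool) → Bool :=
  orMask (irrelevantCoords f) f

def toSemiGoldilocks (g : (Fin n → Bool) → Bool) : (Fin n → Bool) → Bool :=
  g ∘ maskOff (trueUnits g)

lemma toNondegenerate_mem (hf : IsLTF f) (hm : Monotone f) (hu : ∀ i, f (unitVec i) = false) :
    IsLTF (toNondegenerate f) ∧ Monotone (toNondegenerate f) ∧
      ∀ i, DependsOnCoord (toNondegenerate f) i := by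
  refine ⟨hf.orMask, hm.orMask, fun i => ?_⟩
  by_cases hi : DependsOnCoord f i
  · exact hi.orMask_of_notMem (fun h => mem_irrelevantCoords.mp h hi)
      (apply_maskOff_of_not_dependsOnCoord fun j => mem_irrelevantCoords.mp)
  · have h0 : f ⊥ = false := le_bot_iff.mp ((hu i).le.trans' (hm bot_le))
    exact dependsOnCoord_orMask_of_mem h0 (mem_irrelevantCoords.mpr hi)

lemma toSemiGoldilocks_mem (hf : IsLTF g) (hm : Monotone g) (hd : ∀ i, DependsOnCoord g i) :
    IsLTF (toSemiGoldilocks g) ∧ Monotone (toSemiGoldilocks g) ∧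
      ∀ i, toSemiGoldilocks g (unitVec i) = false := by
  refine ⟨hf.comp_maskOff, hm.comp (maskOff_monotone _), fun i => ?_⟩
  simp only [toSemiGoldilocks, Function.comp_apply]
  by_cases hi : i ∈ trueUnits g
  · rw [unitVec, maskOff_update_of_mem hi, maskOff_eq_self (x := ⊥) fun _ _ => rfl]
    exact hm.apply_bot_of_dependsOnCoord (hd i)
  · rw [maskOff_eq_self fun j hj => unitVec_apply_of_ne (by rintro rfl; exact hi hj)]
    simpa [mem_trueUnits] using hi

lemma toSemiGoldilocks_toNondegenerate (hu : ∀ i, f (unitVec i) = false) :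
    toSemiGoldilocks (toNondegenerate f) = f := by
  funext x
  rw [toSemiGoldilocks, toNondegenerate, trueUnits_orMask fun i _ => hu i, Function.comp_apply,
    orMask_apply_of_forall fun _ => maskOff_apply_of_mem,
    apply_maskOff_of_not_dependsOnCoord (f := f) fun _ => mem_irrelevantCoords.mp]

lemma toNondegenerate_toSemiGoldilocks (hm : Monotone g) (hd : ∀ i, DependsOnCoord g i) :
    toNondegenerate (toSemiGoldilocks g) = g := by
  rw [toNondegenerate, toSemiGoldilocks, irrelevantCoords_comp_maskOff_trueUnits hm hd,
    orMask_comp_maskOff, orMask_trueUnits_of_monotone hm]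

end bijection

/-- The number of Semi-Goldilocks LTFs on `n` variables equals the number of positive
nondegenerate LTFs on `n` variables. -/
theorem stmt_18 (n : ℕ) :
    Set.ncard {f : (Fin n → Bool) → Bool | SemiGoldilocks f} =
      Set.ncard {f : (Fin n → Bool) → Bool |
        IsLTF f ∧ (∀ x y : Fin n → Bool, (∀ i, x i ≤ y i) → f x ≤ f y) ∧
        ∀ i, DependsOnCoord f i} := by
  have hsemi : {f : (Fin n → Bool) → Bool | SemiGoldilocks f} =
      {f | IsLTF f ∧ Monotone f ∧ ∀ i, f (unitVec i) = false} :=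
    Set.ext semiGoldilocks_iff
  rw [hsemi]
  refine Set.BijOn.ncard_eq (Set.InvOn.bijOn (f := toNondegenerate) (f' := toSemiGoldilocks) ⟨?_, ?_⟩ ?_ ?_)
  · exact fun f ⟨_, _, hu⟩ => toSemiGoldilocks_toNondegenerate hu
  · exact fun g ⟨_, hm, hd⟩ => toNondegenerate_toSemiGoldilocks hm hd
  · exact fun f ⟨hf, hm, hu⟩ => toNondegenerate_mem hf hm hu
  · exact fun g ⟨hf, hm, hd⟩ => toSemiGoldilocks_mem hf hm hd
end
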